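/- arXiv:1305.4704 — 2 statements merged into one kernel-verified Lean document; each statement's English description precedes it below -/
import Mathlib

section
/- Let {(x^t, y^t, z^t)} be generated by the proximal AMA, suppose assumption A1 holds with triple (x̄, ȳ, z̄), and suppose β>0, T ⪰ 0 and γ>0 satisfy, for some positive μ and σ, 2Σ_f − (β+μ)A*A ⪰ 0 and γ + σ ≤ 1 + min{β,μ}/(2β). Then for every N ≥ 1, Σ_{t=0}^{N−1} ‖z^{t+1} − z^t‖² ≤ (γ²β/σ)·((1/(γβ))‖z⁰ − z̄‖² + ‖y⁰ − ȳ‖²_T) − (γ²β/σ)·((1/(γβ))‖z^N − z̄‖² + ‖y^N − ȳ‖²_T). -/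
/-!
The optimality conditions of the two subproblems give `A* z^t ∈ ∂f(x^{t+1})` and
`B*(z^t − β r) − T(y^{t+1} − y^t) ∈ ∂g(y^{t+1})`, with `r = Ax^{t+1} + By^{t+1} − c`.
Pairing these with `A* z̄ ∈ ∂f(x̄)`, `B* z̄ ∈ ∂g(ȳ)` through the strong monotonicity of `∂f` and
`∂g`, and absorbing the cross term `⟪r, A(x^{t+1} − x̄)⟫` by Young's inequality and
`2Σ_f ⪰ (β+μ)A*A`, the energy `‖z − z̄‖²/(γβ) + ‖y − ȳ‖²_T` drops at every step by at least
`σβ‖r‖² = σ‖z^{t+1} − z^t‖²/(γ²β)`. Summing over `t` telescopes.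
-/

open RealInnerProductSpace Filter Topology

def IsSubgradAt {E : Type*} [NormedAddCommGroup E] [InnerProductSpace ℝ E]
    (f : E → EReal) (v x : E) : Prop :=
  ∀ u, f x + ((⟪v, u - x⟫ : ℝ) : EReal) ≤ f u

section Subgradient

variable {E : Type*} [NormedAddCommGroup E] [InnerProductSpace ℝ E]

theorem isSubgradAt_of_isMin_sub_inner (f : E → EReal) (v w : E)
    (hmin : ∀ u, f w + ((-⟪v, w⟫ : ℝ) : EReal) ≤ f u + ((-⟪v, u⟫ : ℝ) : EReal)) :
    IsSubgradAt f v w := by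
  intro u
  have h := add_le_add (hmin u) (le_refl ((⟪v, u⟫ : ℝ) : EReal))
  rwa [add_assoc, add_assoc, ← EReal.coe_add, ← EReal.coe_add, neg_add_cancel, EReal.coe_zero,
    add_zero, neg_add_eq_sub, ← inner_sub_right] at h

theorem nonpos_of_forall_le_mul {a C : ℝ} (h : ∀ t ∈ Set.Ioc (0 : ℝ) 1, a ≤ t * C) : a ≤ 0 := by
  have hlim : Tendsto (fun t : ℝ => t * C) (𝓝[>] 0) (𝓝 0) := by
    simpa using ((continuous_mul_const C).tendsto 0).mono_left nhdsWithin_le_nhds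
  exact ge_of_tendsto hlim (eventually_of_mem (Ioc_mem_nhdsGT zero_lt_one) h)

theorem isSubgradAt_of_isMin_add (g : E → EReal) (hg_ne_bot : ∀ y, g y ≠ ⊥)
    (hg_cvx : ∀ (y₁ y₂ : E) (a b : ℝ), 0 ≤ a → 0 ≤ b → a + b = 1 →
      g (a • y₁ + b • y₂) ≤ (a : EReal) * g y₁ + (b : EReal) * g y₂)
    (h : E → ℝ) (v w : E)
    (hquad : ∀ d, ∃ C, ∀ t ∈ Set.Ioc (0 : ℝ) 1, h (w + t • d) ≤ h w - t * ⟪v, d⟫ + t ^ 2 * C)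
    (hmin : ∀ u, g w + (h w : EReal) ≤ g u + (h u : EReal)) :
    IsSubgradAt g v w := by
  intro u
  by_cases hu : g u = ⊤
  · rw [hu]; exact le_top
  obtain ⟨gu, hgu⟩ : ∃ r : ℝ, g u = r := ⟨_, (EReal.coe_toReal hu (hg_ne_bot u)).symm⟩
  have hw : g w ≠ ⊤ := fun hw ↦ by
    simpa [hw, hgu, ← EReal.coe_add] using hmin u
  obtain ⟨gw, hgw⟩ : ∃ r : ℝ, g w = r := ⟨_, (EReal.coe_toReal hw (hg_ne_bot w)).symm⟩
  rw [hgu, hgw, ← EReal.coe_add, EReal.coe_le_coe_iff, ← sub_nonpos]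
  -- compare `w` with `w + t • (u - w)` and let `t → 0⁺`
  obtain ⟨C, hC⟩ := hquad (u - w)
  refine nonpos_of_forall_le_mul (C := C) fun t ht ↦ ?_
  have hcvx := hg_cvx w u (1 - t) t (by linarith [ht.2]) ht.1.le (by ring)
  rw [show (1 - t) • w + t • u = w + t • (u - w) by module, hgu, hgw, ← EReal.coe_mul,
    ← EReal.coe_mul, ← EReal.coe_add] at hcvx
  have hwt : g (w + t • (u - w)) ≠ ⊤ := ne_top_of_le_ne_top (EReal.coe_ne_top _) hcvx
  obtain ⟨gwt, hgwt⟩ : ∃ r : ℝ, g (w + t • (u - w)) = r :=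
    ⟨_, (EReal.coe_toReal hwt (hg_ne_bot _)).symm⟩
  have hmin' := hmin (w + t • (u - w))
  rw [hgwt, hgw, ← EReal.coe_add, ← EReal.coe_add, EReal.coe_le_coe_iff] at hmin'
  rw [hgwt, EReal.coe_le_coe_iff] at hcvx
  have := hC t ht
  nlinarith [ht.1]

end Subgradient

section Quadratic

variable {Y Z : Type*} [NormedAddCommGroup Y] [InnerProductSpace ℝ Y]
  [NormedAddCommGroup Z] [InnerProductSpace ℝ Z]

theorem proxObjective_add_smul [CompleteSpace Y] [CompleteSpace Z]
    (B : Y →L[ℝ] Z) (T : Y →L[ℝ] Y) (hT_sa : ∀ u v : Y, ⟪T u, v⟫ = ⟪u, T v⟫)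
    (z a c : Z) (β : ℝ) (y₀ w d : Y) (t : ℝ) :
    -⟪z, B (w + t • d)⟫ + β / 2 * ‖a + B (w + t • d) - c‖ ^ 2
        + 1 / 2 * ⟪w + t • d - y₀, T (w + t • d - y₀)⟫
      = (-⟪z, B w⟫ + β / 2 * ‖a + B w - c‖ ^ 2 + 1 / 2 * ⟪w - y₀, T (w - y₀)⟫)
        - t * ⟪ContinuousLinearMap.adjoint B (z - β • (a + B w - c)) - T (w - y₀), d⟫
        + t ^ 2 * (β / 2 * ‖B d‖ ^ 2 + 1 / 2 * ⟪d, T d⟫) := by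
  rw [show a + B (w + t • d) - c = (a + B w - c) + t • B d by rw [map_add, map_smul]; abel,
    show w + t • d - y₀ = (w - y₀) + t • d by abel, map_add B, map_smul]
  generalize a + B w - c = r
  generalize w - y₀ = e
  have hde : ⟪d, T e⟫ = ⟪e, T d⟫ := by rw [← hT_sa, real_inner_comm]
  simp only [norm_add_sq_real, norm_smul, Real.norm_eq_abs, mul_pow, sq_abs, map_add, map_smul,
    inner_add_left, inner_add_right, inner_sub_left, real_inner_smul_left, real_inner_smul_right,
    ContinuousLinearMap.adjoint_inner_left, hT_sa, hde]
  ring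

theorem two_inner_sub_eq_of_selfAdjoint (T : Y →L[ℝ] Y) (hT_sa : ∀ u v : Y, ⟪T u, v⟫ = ⟪u, T v⟫)
    (u v w : Y) :
    2 * ⟪T (u - v), u - w⟫
      = ⟪u - w, T (u - w)⟫ + ⟪u - v, T (u - v)⟫ - ⟪v - w, T (v - w)⟫ := by
  rw [show u - v = (u - w) - (v - w) by abel]
  generalize u - w = p
  generalize v - w = q
  have hqp : ⟪q, T p⟫ = ⟪p, T q⟫ := by rw [← hT_sa, real_inner_comm]
  simp only [map_sub, inner_sub_left, inner_sub_right, hT_sa, hqp]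
  ring

theorem mul_norm_sq_le_of_young (a r : Z) (s β μ : ℝ) (hβ : 0 < β) (hμ : 0 < μ)
    (hs : 0 ≤ 2 * s - (β + μ) * ‖a‖ ^ 2) :
    (β + min β μ / 2) * ‖r‖ ^ 2 ≤ 2 * s + 2 * β * ‖r‖ ^ 2 - 2 * β * ⟪r, a⟫ := by
  -- Young's inequality `2β(β+μ)⟪r, a⟫ ≤ (β+μ)²‖a‖² + β²‖r‖²`
  have hsq : 0 ≤ ‖(β + μ) • a - β • r‖ ^ 2 := sq_nonneg _
  rw [norm_sub_sq_real, real_inner_smul_left, real_inner_smul_right, norm_smul, norm_smul,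
    mul_pow, mul_pow, Real.norm_eq_abs, Real.norm_eq_abs, sq_abs, sq_abs,
    real_inner_comm] at hsq
  have hmin : min β μ * (β + μ) ≤ 2 * (β * μ) := by
    rcases le_total β μ with h | h
    · rw [min_eq_left h]; nlinarith
    · rw [min_eq_right h]; nlinarith
  have hβμ : 0 < β + μ := by linarith
  refine le_of_mul_le_mul_left ?_ hβμ
  nlinarith [sq_nonneg ‖r‖, mul_le_mul_of_nonneg_right hmin (sq_nonneg ‖r‖)]

end Quadratic

section ProximalAMA

variable {X Y Z : Type*} [NormedAddCommGroup X] [InnerProductSpace ℝ X] [CompleteSpace X]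
  [NormedAddCommGroup Y] [InnerProductSpace ℝ Y] [CompleteSpace Y]
  [NormedAddCommGroup Z] [InnerProductSpace ℝ Z] [CompleteSpace Z]

noncomputable def amaLyapunov (T : Y →L[ℝ] Y) (γ β : ℝ) (zb : Z) (yb : Y) (z : Z) (y : Y) : ℝ :=
  1 / (γ * β) * ‖z - zb‖ ^ 2 + ⟪y - yb, T (y - yb)⟫

theorem amaLyapunov_descent (A : X →L[ℝ] Z) (B : Y →L[ℝ] Z) (c : Z) (Sf : X →L[ℝ] X)
    (T : Y →L[ℝ] Y) (hT_sa : ∀ u v : Y, ⟪T u, v⟫ = ⟪u, T v⟫) (hT_psd : ∀ y : Y, 0 ≤ ⟪y, T y⟫)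
    {β γ μ σ : ℝ} (hβ : 0 < β) (hγ : 0 < γ) (hμ : 0 < μ) (hσ : 0 < σ)
    (hcond2 : ∀ w : X, 0 ≤ 2 * ⟪w, Sf w⟫ - (β + μ) * ‖A w‖ ^ 2)
    (hcond3 : γ + σ ≤ 1 + min β μ / (2 * β))
    {x₁ xb : X} {y₀ y₁ yb : Y} {z z' zb : Z} (hc : A xb + B yb - c = 0)
    (hf : ⟪x₁ - xb, Sf (x₁ - xb)⟫
      ≤ ⟪ContinuousLinearMap.adjoint A z - ContinuousLinearMap.adjoint A zb, x₁ - xb⟫)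
    (hg : 0 ≤ ⟪ContinuousLinearMap.adjoint B (z - β • (A x₁ + B y₁ - c)) - T (y₁ - y₀)
      - ContinuousLinearMap.adjoint B zb, y₁ - yb⟫)
    (hz : z' = z - (γ * β) • (A x₁ + B y₁ - c)) :
    ‖z' - z‖ ^ 2
      ≤ γ ^ 2 * β / σ * (amaLyapunov T γ β zb yb z y₀ - amaLyapunov T γ β zb yb z' y₁) := by
  obtain ⟨r, hr⟩ : ∃ r, r = A x₁ + B y₁ - c := ⟨_, rfl⟩
  rw [← hr] at hg hz
  have hr_split : r = A (x₁ - xb) + B (y₁ - yb) := by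
    rw [hr, map_sub, map_sub, ← sub_eq_zero.mp hc]; abel
  have hfx : ⟪x₁ - xb, Sf (x₁ - xb)⟫ ≤ ⟪z - zb, A (x₁ - xb)⟫ := by
    rwa [← map_sub, ContinuousLinearMap.adjoint_inner_left] at hf
  have hgy : β * ⟪r, B (y₁ - yb)⟫ + ⟪T (y₁ - y₀), y₁ - yb⟫ ≤ ⟪z - zb, B (y₁ - yb)⟫ := by
    simp only [inner_sub_left, ContinuousLinearMap.adjoint_inner_left, real_inner_smul_left] at hg
    rw [inner_sub_left]
    linarith
  have hyoung := mul_norm_sq_le_of_young (A (x₁ - xb)) r _ β μ hβ hμ (hcond2 (x₁ - xb))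
  have hT3 := two_inner_sub_eq_of_selfAdjoint T hT_sa y₁ y₀ yb
  have hzr : ⟪z - zb, r⟫ = ⟪z - zb, A (x₁ - xb)⟫ + ⟪z - zb, B (y₁ - yb)⟫ := by
    rw [hr_split, inner_add_right]
  have hrr : ‖r‖ ^ 2 = ⟪r, A (x₁ - xb)⟫ + ⟪r, B (y₁ - yb)⟫ := by
    rw [← inner_add_right, ← hr_split, real_inner_self_eq_norm_sq]
  have hγσ : (γ + σ) * β ≤ β + min β μ / 2 := by
    calc (γ + σ) * β ≤ (1 + min β μ / (2 * β)) * β := mul_le_mul_of_nonneg_right hcond3 hβ.le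
      _ = β + min β μ / 2 := by field_simp
  have key : (γ + σ) * β * ‖r‖ ^ 2 + ⟪y₁ - yb, T (y₁ - yb)⟫ - ⟪y₀ - yb, T (y₀ - yb)⟫
      ≤ 2 * ⟪z - zb, r⟫ := by
    nlinarith [mul_le_mul_of_nonneg_right hγσ (sq_nonneg ‖r‖), hT_psd (y₁ - y₀)]
  have hRHS : amaLyapunov T γ β zb yb z y₀ - amaLyapunov T γ β zb yb z' y₁
      = 2 * ⟪z - zb, r⟫ - γ * β * ‖r‖ ^ 2
        + ⟪y₀ - yb, T (y₀ - yb)⟫ - ⟪y₁ - yb, T (y₁ - yb)⟫ := by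
    rw [amaLyapunov, amaLyapunov, hz, sub_right_comm, norm_sub_sq_real (z - zb),
      real_inner_smul_right, norm_smul, mul_pow, Real.norm_eq_abs, sq_abs]
    field_simp
    ring
  rw [hRHS, hz, sub_sub_cancel_left, norm_neg, norm_smul, mul_pow, Real.norm_eq_abs, sq_abs]
  calc (γ * β) ^ 2 * ‖r‖ ^ 2 = γ ^ 2 * β / σ * (σ * β * ‖r‖ ^ 2) := by field_simp
    _ ≤ _ := mul_le_mul_of_nonneg_left (by linarith) (by positivity)

end ProximalAMA

theorem stmt_6_general
    {X Y Z : Type*}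
    [NormedAddCommGroup X] [InnerProductSpace ℝ X] [FiniteDimensional ℝ X]
    [NormedAddCommGroup Y] [InnerProductSpace ℝ Y] [FiniteDimensional ℝ Y]
    [NormedAddCommGroup Z] [InnerProductSpace ℝ Z] [FiniteDimensional ℝ Z]
    (f : X → EReal) (g : Y → EReal)
    -- `f` and `g` are proper
    (hg_ne_bot : ∀ y, g y ≠ ⊥)
    -- `f` and `g` are convex
    (hg_cvx : ∀ (y₁ y₂ : Y) (a b : ℝ), 0 ≤ a → 0 ≤ b → a + b = 1 →
      g (a • y₁ + b • y₂) ≤ (a : EReal) * g y₁ + (b : EReal) * g y₂)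
    (A : X →L[ℝ] Z) (B : Y →L[ℝ] Z) (c : Z)
    (Sf : X →L[ℝ] X) (Sg : Y →L[ℝ] Y) (T : Y →L[ℝ] Y)
    -- `Sf ≻ 0`, `Sg ⪰ 0`, `T ⪰ 0` are self-adjoint
    (hT_sa : ∀ u v : Y, ⟪T u, v⟫ = ⟪u, T v⟫)
    (hSg_psd : ∀ y : Y, 0 ≤ ⟪y, Sg y⟫)
    (hT_psd : ∀ y : Y, 0 ≤ ⟪y, T y⟫)
    -- the subdifferential monotonicity conditions on `f` and `g`
    (hf_mono : ∀ (x₁ x₂ u₁ u₂ : X), IsSubgradAt f u₁ x₁ → IsSubgradAt f u₂ x₂ →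
      ⟪x₁ - x₂, Sf (x₁ - x₂)⟫ ≤ ⟪u₁ - u₂, x₁ - x₂⟫)
    (hg_mono : ∀ (y₁ y₂ v₁ v₂ : Y), IsSubgradAt g v₁ y₁ → IsSubgradAt g v₂ y₂ →
      ⟪y₁ - y₂, Sg (y₁ - y₂)⟫ ≤ ⟪v₁ - v₂, y₁ - y₂⟫)
    (β γ : ℝ) (hβ : 0 < β) (hγ : 0 < γ)
    (x : ℕ → X) (y : ℕ → Y) (z : ℕ → Z)
    -- the proximal AMA iterations
    (hx : ∀ (t : ℕ) (x' : X),
      f (x (t+1)) + ((-⟪z t, A (x (t+1))⟫ : ℝ) : EReal)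
        ≤ f x' + ((-⟪z t, A x'⟫ : ℝ) : EReal))
    (hy : ∀ (t : ℕ) (y' : Y),
      g (y (t+1)) + ((-⟪z t, B (y (t+1))⟫ + β / 2 * ‖A (x (t+1)) + B (y (t+1)) - c‖ ^ 2
          + 1 / 2 * ⟪y (t+1) - y t, T (y (t+1) - y t)⟫ : ℝ) : EReal)
        ≤ g y' + ((-⟪z t, B y'⟫ + β / 2 * ‖A (x (t+1)) + B y' - c‖ ^ 2
          + 1 / 2 * ⟪y' - y t, T (y' - y t)⟫ : ℝ) : EReal))
    (hz : ∀ t : ℕ, z (t+1) = z t - (γ * β) • (A (x (t+1)) + B (y (t+1)) - c))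
    -- assumption A1 with an explicit triple `(x̄, ȳ, z̄)`
    (xb : X) (yb : Y) (zb : Z)
    (hA1f : IsSubgradAt f (ContinuousLinearMap.adjoint A zb) xb)
    (hA1g : IsSubgradAt g (ContinuousLinearMap.adjoint B zb) yb)
    (hA1c : A xb + B yb - c = 0)
    (μ σ : ℝ) (hμ : 0 < μ) (hσ : 0 < σ)
    -- `2Σf − (β+μ)A*A ⪰ 0` and `γ + σ ≤ 1 + min{β,μ}/(2β)`
    (hcond2 : ∀ w : X, 0 ≤ 2 * ⟪w, Sf w⟫ - (β + μ) * ‖A w‖ ^ 2)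
    (hcond3 : γ + σ ≤ 1 + min β μ / (2 * β)) :
    ∀ N : ℕ, 1 ≤ N →
      ∑ t ∈ Finset.range N, ‖z (t+1) - z t‖ ^ 2
        ≤ γ ^ 2 * β / σ * (1 / (γ * β) * ‖z 0 - zb‖ ^ 2 + ⟪y 0 - yb, T (y 0 - yb)⟫)
          - γ ^ 2 * β / σ * (1 / (γ * β) * ‖z N - zb‖ ^ 2 + ⟪y N - yb, T (y N - yb)⟫) := by
  intro N _
  have hsub_x : ∀ t, IsSubgradAt f (ContinuousLinearMap.adjoint A (z t)) (x (t+1)) := fun t ↦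
    isSubgradAt_of_isMin_sub_inner f _ _
      (by simpa only [ContinuousLinearMap.adjoint_inner_left] using hx t)
  have hsub_y : ∀ t, IsSubgradAt g
      (ContinuousLinearMap.adjoint B (z t - β • (A (x (t+1)) + B (y (t+1)) - c))
        - T (y (t+1) - y t)) (y (t+1)) := fun t ↦
    isSubgradAt_of_isMin_add g hg_ne_bot hg_cvx
      (fun y' ↦ -⟪z t, B y'⟫ + β / 2 * ‖A (x (t+1)) + B y' - c‖ ^ 2
        + 1 / 2 * ⟪y' - y t, T (y' - y t)⟫) _ _
      (fun d ↦ ⟨_, fun s _ ↦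
        (proxObjective_add_smul B T hT_sa (z t) (A (x (t+1))) c β (y t) (y (t+1)) d s).le⟩)
      (hy t)
  have hstep : ∀ t, ‖z (t+1) - z t‖ ^ 2 ≤ γ ^ 2 * β / σ *
      (amaLyapunov T γ β zb yb (z t) (y t) - amaLyapunov T γ β zb yb (z (t+1)) (y (t+1))) :=
    fun t ↦ amaLyapunov_descent A B c Sf T hT_sa hT_psd hβ hγ hμ hσ hcond2 hcond3 hA1c
      (hf_mono _ _ _ _ (hsub_x t) hA1f) ((hSg_psd _).trans (hg_mono _ _ _ _ (hsub_y t) hA1g))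
      (hz t)
  calc ∑ t ∈ Finset.range N, ‖z (t+1) - z t‖ ^ 2
      ≤ ∑ t ∈ Finset.range N, γ ^ 2 * β / σ *
          (amaLyapunov T γ β zb yb (z t) (y t) - amaLyapunov T γ β zb yb (z (t+1)) (y (t+1))) :=
        Finset.sum_le_sum fun t _ ↦ hstep t
    _ = _ := by
      rw [← Finset.mul_sum, Finset.sum_range_sub' (fun t ↦ amaLyapunov T γ β zb yb (z t) (y t)),
        mul_sub]
      rfl

/-- **Summed dual-step bound for the proximal AMA (inequality (bdz) in the proof of
Theorem 3.2).** For every `N ≥ 1`,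
`Σ_{t=0}^{N−1} ‖z^{t+1} − z^t‖²
  ≤ (γ²β/σ)((1/(γβ))‖z⁰ − z̄‖² + ‖y⁰ − ȳ‖²_T)
    − (γ²β/σ)((1/(γβ))‖z^N − z̄‖² + ‖y^N − ȳ‖²_T)`. -/
theorem stmt_6
    {X Y Z : Type*}
    [NormedAddCommGroup X] [InnerProductSpace ℝ X] [FiniteDimensional ℝ X]
    [NormedAddCommGroup Y] [InnerProductSpace ℝ Y] [FiniteDimensional ℝ Y]
    [NormedAddCommGroup Z] [InnerProductSpace ℝ Z] [FiniteDimensional ℝ Z]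
    (f : X → EReal) (g : Y → EReal)
    -- `f` and `g` are proper
    (hf_ne_bot : ∀ x, f x ≠ ⊥) (hf_proper : ∃ x, f x ≠ ⊤)
    (hg_ne_bot : ∀ y, g y ≠ ⊥) (hg_proper : ∃ y, g y ≠ ⊤)
    -- `f` and `g` are closed
    (hf_lsc : LowerSemicontinuous f) (hg_lsc : LowerSemicontinuous g)
    -- `f` and `g` are convex
    (hf_cvx : ∀ (x₁ x₂ : X) (a b : ℝ), 0 ≤ a → 0 ≤ b → a + b = 1 →
      f (a • x₁ + b • x₂) ≤ (a : EReal) * f x₁ + (b : EReal) * f x₂)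
    (hg_cvx : ∀ (y₁ y₂ : Y) (a b : ℝ), 0 ≤ a → 0 ≤ b → a + b = 1 →
      g (a • y₁ + b • y₂) ≤ (a : EReal) * g y₁ + (b : EReal) * g y₂)
    (A : X →L[ℝ] Z) (B : Y →L[ℝ] Z) (c : Z)
    (Sf : X →L[ℝ] X) (Sg : Y →L[ℝ] Y) (T : Y →L[ℝ] Y)
    -- `Sf ≻ 0`, `Sg ⪰ 0`, `T ⪰ 0` are self-adjoint
    (hSf_sa : ∀ u v : X, ⟪Sf u, v⟫ = ⟪u, Sf v⟫)
    (hSg_sa : ∀ u v : Y, ⟪Sg u, v⟫ = ⟪u, Sg v⟫)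
    (hT_sa : ∀ u v : Y, ⟪T u, v⟫ = ⟪u, T v⟫)
    (hSf_pd : ∀ x : X, x ≠ 0 → 0 < ⟪x, Sf x⟫)
    (hSg_psd : ∀ y : Y, 0 ≤ ⟪y, Sg y⟫)
    (hT_psd : ∀ y : Y, 0 ≤ ⟪y, T y⟫)
    -- the subdifferential monotonicity conditions on `f` and `g`
    (hf_mono : ∀ (x₁ x₂ u₁ u₂ : X), IsSubgradAt f u₁ x₁ → IsSubgradAt f u₂ x₂ →
      ⟪x₁ - x₂, Sf (x₁ - x₂)⟫ ≤ ⟪u₁ - u₂, x₁ - x₂⟫)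
    (hg_mono : ∀ (y₁ y₂ v₁ v₂ : Y), IsSubgradAt g v₁ y₁ → IsSubgradAt g v₂ y₂ →
      ⟪y₁ - y₂, Sg (y₁ - y₂)⟫ ≤ ⟪v₁ - v₂, y₁ - y₂⟫)
    (β γ : ℝ) (hβ : 0 < β) (hγ : 0 < γ)
    (x : ℕ → X) (y : ℕ → Y) (z : ℕ → Z)
    -- the proximal AMA iterations
    (hx : ∀ (t : ℕ) (x' : X),
      f (x (t+1)) + ((-⟪z t, A (x (t+1))⟫ : ℝ) : EReal)
        ≤ f x' + ((-⟪z t, A x'⟫ : ℝ) : EReal))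
    (hy : ∀ (t : ℕ) (y' : Y),
      g (y (t+1)) + ((-⟪z t, B (y (t+1))⟫ + β / 2 * ‖A (x (t+1)) + B (y (t+1)) - c‖ ^ 2
          + 1 / 2 * ⟪y (t+1) - y t, T (y (t+1) - y t)⟫ : ℝ) : EReal)
        ≤ g y' + ((-⟪z t, B y'⟫ + β / 2 * ‖A (x (t+1)) + B y' - c‖ ^ 2
          + 1 / 2 * ⟪y' - y t, T (y' - y t)⟫ : ℝ) : EReal))
    (hz : ∀ t : ℕ, z (t+1) = z t - (γ * β) • (A (x (t+1)) + B (y (t+1)) - c))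
    -- assumption A1 with an explicit triple `(x̄, ȳ, z̄)`
    (xb : X) (yb : Y) (zb : Z)
    (hA1f : IsSubgradAt f (ContinuousLinearMap.adjoint A zb) xb)
    (hA1g : IsSubgradAt g (ContinuousLinearMap.adjoint B zb) yb)
    (hA1c : A xb + B yb - c = 0)
    (μ σ : ℝ) (hμ : 0 < μ) (hσ : 0 < σ)
    -- `2Σf − (β+μ)A*A ⪰ 0` and `γ + σ ≤ 1 + min{β,μ}/(2β)`
    (hcond2 : ∀ w : X, 0 ≤ 2 * ⟪w, Sf w⟫ - (β + μ) * ‖A w‖ ^ 2)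
    (hcond3 : γ + σ ≤ 1 + min β μ / (2 * β)) :
    ∀ N : ℕ, 1 ≤ N →
      ∑ t ∈ Finset.range N, ‖z (t+1) - z t‖ ^ 2
        ≤ γ ^ 2 * β / σ * (1 / (γ * β) * ‖z 0 - zb‖ ^ 2 + ⟪y 0 - yb, T (y 0 - yb)⟫)
          - γ ^ 2 * β / σ * (1 / (γ * β) * ‖z N - zb‖ ^ 2 + ⟪y N - yb, T (y N - yb)⟫) :=
  stmt_6_general f g hg_ne_bot hg_cvx A B c Sf Sg T hT_sa hSg_psd hT_psd hf_mono hg_mono β γ hβ hγ x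
    y z hx hy hz xb yb zb hA1f hA1g hA1c μ σ hμ hσ hcond2 hcond3
end

section
/- Let h : Z → ℝ be convex and differentiable with ∇h Lipschitz continuous, P : Y → (−∞,∞] proper closed convex, M : Z → Y a nonzero linear map, and b ∈ Y, and assume (Range(M) − b) ∩ ri(dom P) ≠ ∅. If z̄ minimizes z ↦ h(z) + P(Mz − b), then there exists ȳ ∈ ∂P(Mz̄ − b) such that, setting x̄ = ∇h(z̄), one has x̄ + M*ȳ = 0, Mz̄ − b ∈ ∂P*(ȳ), and z̄ ∈ ∂h*(x̄). In particular, assumption A1 holds for the dual problem min_{x,y} h*(x) + P*(y) + ⟨b, y⟩ subject to x + M*y = 0 (with f = h*, g = P* + ⟨b, ·⟩, A = I, B = M*, c = 0). -/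
open RealInnerProductSpace Filter Topology

/-- The convex conjugate of an extended-real-valued function. -/
noncomputable def conj {E : Type*} [NormedAddCommGroup E] [InnerProductSpace ℝ E]
    (f : E → EReal) (w : E) : EReal :=
  ⨆ u, ((⟪w, u⟫ : ℝ) : EReal) - f u

/-- The convex conjugate of a real-valued function. -/
noncomputable def conjR {E : Type*} [NormedAddCommGroup E] [InnerProductSpace ℝ E]
    (f : E → ℝ) (w : E) : EReal :=
  ⨆ u, ((⟪w, u⟫ - f u : ℝ) : EReal)

/-!
Write `u₀ = M z̄ - b`. Minimality of `z̄` and convexity of `P` give, by differentiating along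
`z̄ + t d`, the inequality `P (u₀ + M d) ≥ P u₀ - ⟪∇h z̄, d⟫`. Hence `-∇h z̄` vanishes on `ker M`,
so it equals `M* y₁`, and `P u₀ + ⟪y₁, ·⟫` minorizes `P (u₀ + ·)` on `range M`. Because
`range M - b` meets the relative interior of `dom P`, this affine minorant extends to all of `Y`
one orthogonal direction at a time (a finite-dimensional Hahn–Banach argument). The slope `ȳ` of
the extension still satisfies `M* ȳ = -∇h z̄`. Thus `ȳ ∈ ∂P u₀`, and the remaining inclusions are
the equality cases of the Fenchel–Young inequality for `P` and for `h`.
-/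

open Set

def EConvex {E : Type*} [AddCommGroup E] [Module ℝ E] (F : E → EReal) : Prop :=
  ∀ (u₁ u₂ : E) (a b : ℝ), 0 ≤ a → 0 ≤ b → a + b = 1 →
    F (a • u₁ + b • u₂) ≤ (a : EReal) * F u₁ + (b : EReal) * F u₂

lemma EConvex.comp_linearMap_sub {Z Y : Type*} [AddCommGroup Z] [Module ℝ Z] [AddCommGroup Y]
    [Module ℝ Y] {F : Y → EReal} (hF : EConvex F) (M : Z →ₗ[ℝ] Y) (c : Y) :
    EConvex fun w => F (M w - c) := by
  intro u₁ u₂ a b ha hb hab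
  convert hF (M u₁ - c) (M u₂ - c) a b ha hb hab using 2
  rw [map_add, map_smul, map_smul, smul_sub, smul_sub]
  linear_combination (norm := module) hab • c

lemma EReal.ne_top_of_coe_add_le_coe_add {a b : ℝ} {x y : EReal}
    (hle : (a : EReal) + x ≤ b + y) (hy : y ≠ ⊤) : x ≠ ⊤ := by
  rintro rfl
  rw [EReal.coe_add_top, top_le_iff] at hle
  exact (EReal.add_lt_top (EReal.coe_ne_top _) hy).ne hle

lemma HasDerivAt.le_of_forall_sub_le_mul {φ : ℝ → ℝ} {c A : ℝ} (hφ : HasDerivAt φ c 0)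
    (hA : ∀ t ∈ Ioo (0 : ℝ) 1, φ t - φ 0 ≤ t * A) : c ≤ A := by
  have hslope : Tendsto (slope φ 0) (𝓝[>] 0) (𝓝 c) :=
    hφ.tendsto_slope.mono_left (nhdsWithin_mono _ fun t ht => ne_of_gt ht)
  refine le_of_tendsto hslope ?_
  filter_upwards [Ioo_mem_nhdsGT zero_lt_one] with t ht
  rw [slope_def_field, sub_zero, div_le_iff₀ ht.1, mul_comm]
  exact hA t ht

lemma HasGradientAt.hasDerivAt_comp_add_smul {Z : Type*} [NormedAddCommGroup Z]
    [InnerProductSpace ℝ Z] [CompleteSpace Z] {f : Z → ℝ} {x z : Z} (hf : HasGradientAt f x z)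
    (d : Z) : HasDerivAt (fun t : ℝ => f (z + t • d)) ⟪x, d⟫ 0 := by
  have hline : HasDerivAt (fun t : ℝ => z + t • d) d 0 := by
    simpa using ((hasDerivAt_id (0 : ℝ)).smul_const d).const_add z
  have hf' : HasFDerivAt f (InnerProductSpace.toDual ℝ Z x) (z + (0 : ℝ) • d) := by
    simpa using hf.hasFDerivAt
  exact hf'.comp_hasDerivAt 0 hline

lemma ConvexOn.add_inner_sub_le_of_hasGradientAt {Z : Type*} [NormedAddCommGroup Z]
    [InnerProductSpace ℝ Z] [CompleteSpace Z] {f : Z → ℝ} {x z : Z} (hf : ConvexOn ℝ univ f)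
    (hx : HasGradientAt f x z) (u : Z) : f z + ⟪x, u - z⟫ ≤ f u := by
  suffices ⟪x, u - z⟫ ≤ f u - f z by linarith
  refine (hx.hasDerivAt_comp_add_smul (u - z)).le_of_forall_sub_le_mul fun t ht => ?_
  have hcomb : z + t • (u - z) = (1 - t) • z + t • u := by module
  have := hf.2 (mem_univ z) (mem_univ u) (show 0 ≤ 1 - t by linarith [ht.2]) ht.1.le
    (by ring)
  simp only [hcomb, zero_smul, add_zero, smul_eq_mul] at this ⊢
  linarith

lemma ContinuousLinearMap.orthogonal_ker_eq_range_adjoint {E F : Type*}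
    [NormedAddCommGroup E] [InnerProductSpace ℝ E] [FiniteDimensional ℝ E]
    [NormedAddCommGroup F] [InnerProductSpace ℝ F] [CompleteSpace F] (T : E →L[ℝ] F) :
    (LinearMap.ker (T : E →ₗ[ℝ] F))ᗮ =
      LinearMap.range (ContinuousLinearMap.adjoint T : F →ₗ[ℝ] E) := by
  rw [T.orthogonal_ker]
  exact (Submodule.closed_of_finiteDimensional _).submodule_topologicalClosure_eq

section Subgradient

variable {E : Type*} [NormedAddCommGroup E] [InnerProductSpace ℝ E]

lemma isSubgradAt_neg_of_hasGradientAt_of_forall_le [CompleteSpace E] {h : E → ℝ}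
    {G : E → EReal} {x z : E} (hG : EConvex G) (hbot : ∀ w, G w ≠ ⊥) (hfin : G z ≠ ⊤)
    (hx : HasGradientAt h x z) (hmin : ∀ w, (h z : EReal) + G z ≤ h w + G w) :
    IsSubgradAt G (-x) z := by
  intro w
  lift G z to ℝ using ⟨hfin, hbot z⟩ with p hp
  rcases eq_or_ne (G w) ⊤ with hw | hw
  · rw [hw]; exact le_top
  lift G w to ℝ using ⟨hw, hbot w⟩ with r hr
  rw [← EReal.coe_add, EReal.coe_le_coe_iff, inner_neg_left]
  suffices -⟪x, w - z⟫ ≤ r - p by linarith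
  refine (hx.hasDerivAt_comp_add_smul (w - z)).neg.le_of_forall_sub_le_mul fun t ht => ?_
  have hcomb : z + t • (w - z) = (1 - t) • z + t • w := by module
  have hseg := hG z w (1 - t) t (by linarith [ht.2]) ht.1.le (by ring)
  have hopt := hmin (z + t • (w - z))
  rw [← hp, ← hr, ← EReal.coe_mul, ← EReal.coe_mul, ← EReal.coe_add] at hseg
  rw [hcomb] at hopt
  lift G ((1 - t) • z + t • w) to ℝ using ⟨ne_top_of_le_ne_top (EReal.coe_ne_top _) hseg,
    hbot _⟩ with q
  rw [← EReal.coe_add, ← EReal.coe_add, EReal.coe_le_coe_iff] at hopt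
  rw [EReal.coe_le_coe_iff] at hseg
  simp only [Pi.neg_apply, zero_smul, add_zero, hcomb]
  nlinarith

lemma IsSubgradAt.inner_eq_zero_of_map_eq_zero {Y : Type*} [AddCommGroup Y] [Module ℝ Y]
    {F : Y → EReal} {M : E →ₗ[ℝ] Y} {b : Y} {v z : E} {p : ℝ}
    (hv : IsSubgradAt (fun w => F (M w - b)) v z) (hp : F (M z - b) = p) {d : E}
    (hd : M d = 0) : ⟪v, d⟫ = 0 := by
  have hplus := hv (z + d)
  have hminus := hv (z - d)
  simp only [map_add, map_sub, hd, add_zero, sub_zero, add_sub_cancel_left, sub_sub_cancel_left,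
    inner_neg_right, hp, ← EReal.coe_add, EReal.coe_le_coe_iff] at hplus hminus
  linarith

lemma IsSubgradAt.exists_adjoint_eq {Y : Type*} [NormedAddCommGroup Y] [InnerProductSpace ℝ Y]
    [FiniteDimensional ℝ E] [CompleteSpace Y] {F : Y → EReal} {M : E →L[ℝ] Y} {b : Y} {v z : E}
    {p : ℝ} (hv : IsSubgradAt (fun w => F (M w - b)) v z) (hp : F (M z - b) = p) :
    ∃ y, ContinuousLinearMap.adjoint M y = v := by
  rw [← ContinuousLinearMap.coe_coe, ← LinearMap.mem_range, ← M.orthogonal_ker_eq_range_adjoint,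
    Submodule.mem_orthogonal']
  exact fun d hd => hv.inner_eq_zero_of_map_eq_zero hp hd

lemma IsSubgradAt.add_inner_le_of_mem_range {Y : Type*} [NormedAddCommGroup Y]
    [InnerProductSpace ℝ Y] [CompleteSpace E] [CompleteSpace Y] {F : Y → EReal} {M : E →L[ℝ] Y}
    {b y : Y} {z : E} {p : ℝ}
    (hy : IsSubgradAt (fun w => F (M w - b)) (ContinuousLinearMap.adjoint M y) z)
    (hp : F (M z - b) = p) :
    ∀ v ∈ LinearMap.range (M : E →ₗ[ℝ] Y), ((p + ⟪y, v⟫ : ℝ) : EReal) ≤ F (M z - b + v) := by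
  rintro _ ⟨d, rfl⟩
  have hd : F (M z - b) + ((⟪ContinuousLinearMap.adjoint M y, z + d - z⟫ : ℝ) : EReal)
      ≤ F (M (z + d) - b) := hy (z + d)
  rwa [hp, ← EReal.coe_add, add_sub_cancel_left, ContinuousLinearMap.adjoint_inner_left, map_add,
    add_sub_right_comm] at hd

lemma IsSubgradAt.conj_le {f : E → EReal} {v x : E} {p : ℝ} (hv : IsSubgradAt f v x)
    (hp : f x = p) : conj f v ≤ ((⟪v, x⟫ - p : ℝ) : EReal) := by
  refine iSup_le fun u => ?_
  have hu := hv u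
  rw [hp, ← EReal.coe_add] at hu
  calc ((⟪v, u⟫ : ℝ) : EReal) - f u ≤ ((⟪v, u⟫ : ℝ) : EReal) - ((p + ⟪v, u - x⟫ : ℝ) : EReal) :=
        EReal.sub_le_sub le_rfl hu
    _ = ((⟪v, x⟫ - p : ℝ) : EReal) := by
        rw [← EReal.coe_sub, inner_sub_right]; ring_nf

lemma IsSubgradAt.isSubgradAt_conj {f : E → EReal} {v x : E} {p : ℝ} (hv : IsSubgradAt f v x)
    (hp : f x = p) : IsSubgradAt (conj f) x v := by
  intro w
  calc conj f v + ((⟪x, w - v⟫ : ℝ) : EReal)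
      ≤ ((⟪v, x⟫ - p : ℝ) : EReal) + ((⟪x, w - v⟫ : ℝ) : EReal) := by
        gcongr; exact hv.conj_le hp
    _ = ((⟪w, x⟫ : ℝ) : EReal) - f x := by
        rw [hp, ← EReal.coe_add, ← EReal.coe_sub, inner_sub_right, real_inner_comm x,
          real_inner_comm x]
        ring_nf
    _ ≤ conj f w := le_iSup (fun u => ((⟪w, u⟫ : ℝ) : EReal) - f u) x

lemma conjR_eq_conj (f : E → ℝ) : conjR f = conj fun u => (f u : EReal) := by
  ext w
  simp only [conjR, conj, EReal.coe_sub]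

lemma IsSubgradAt.add_inner {f : E → EReal} {v x : E} (hv : IsSubgradAt f v x) (b : E) :
    IsSubgradAt (fun w => f w + ((⟪b, w⟫ : ℝ) : EReal)) (v + b) x := by
  intro u
  calc f x + ((⟪b, x⟫ : ℝ) : EReal) + ((⟪v + b, u - x⟫ : ℝ) : EReal)
      = f x + ((⟪v, u - x⟫ : ℝ) : EReal) + ((⟪b, u⟫ : ℝ) : EReal) := by
        rw [add_assoc, add_assoc, ← EReal.coe_add, ← EReal.coe_add, inner_add_left,
          inner_sub_right b]
        ring_nf
    _ ≤ f u + ((⟪b, u⟫ : ℝ) : EReal) := by gcongr; exact hv u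

end Subgradient

lemma exists_add_smul_sub_mem_of_mem_intrinsicInterior {Y : Type*} [NormedAddCommGroup Y]
    [NormedSpace ℝ Y] {S : Set Y} {x q : Y} (hx : x ∈ intrinsicInterior ℝ S) (hq : q ∈ S) :
    ∃ ε : ℝ, 0 < ε ∧ x + ε • (x - q) ∈ S := by
  obtain ⟨x, hx, rfl⟩ := hx
  have hline : ∀ t : ℝ, (x : Y) + t • ((x : Y) - q) ∈ affineSpan ℝ S := fun t => by
    simpa [vsub_eq_sub, vadd_eq_add, add_comm] using
      (affineSpan ℝ S).smul_vsub_vadd_mem t x.2 (subset_affineSpan ℝ S hq) x.2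
  let f : ℝ → affineSpan ℝ S := fun t => ⟨(x : Y) + t • ((x : Y) - q), hline t⟩
  have hf : Continuous f := by fun_prop
  have hf0 : f 0 = x := Subtype.ext (by simp [f])
  have hnhds : f ⁻¹' interior (((↑) : affineSpan ℝ S → Y) ⁻¹' S) ∈ 𝓝 (0 : ℝ) :=
    hf.continuousAt.preimage_mem_nhds (hf0 ▸ isOpen_interior.mem_nhds hx)
  obtain ⟨δ, hδ, hball⟩ := Metric.mem_nhds_iff.1 hnhds
  have hmem : δ / 2 ∈ Metric.ball (0 : ℝ) δ := by
    rw [Metric.mem_ball, Real.dist_eq, sub_zero, abs_of_pos (half_pos hδ)]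
    exact half_lt_self hδ
  have := interior_subset (hball hmem)
  exact ⟨δ / 2, half_pos hδ, this⟩

lemma exists_between_of_forall_le_of_nonempty_iff {s t : Set ℝ} (hst : ∀ a ∈ s, ∀ b ∈ t, a ≤ b)
    (hne : s.Nonempty ↔ t.Nonempty) : ∃ c, (∀ a ∈ s, a ≤ c) ∧ ∀ b ∈ t, c ≤ b := by
  by_cases hs : s.Nonempty
  · obtain ⟨c, hc⟩ := exists_between_of_forall_le hs (hne.1 hs) hst
    exact ⟨c, hc.1, hc.2⟩
  · have ht : ¬t.Nonempty := hne.not.1 hs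
    rw [not_nonempty_iff_eq_empty] at hs ht
    exact ⟨0, by simp [hs], by simp [ht]⟩

section Extension

variable {Y : Type*} [NormedAddCommGroup Y] [InnerProductSpace ℝ Y] {F : Y → EReal}
  {u₀ x₀ y : Y} {p₀ : ℝ} {V : Submodule ℝ Y}

lemma EConvex.slope_le_slope (hF : EConvex F)
    (hy : ∀ v ∈ V, ((p₀ + ⟪y, v⟫ : ℝ) : EReal) ≤ F (u₀ + v)) (e : Y) {v w : Y} (hv : v ∈ V)
    (hw : w ∈ V) {s t q r : ℝ} (hs : s < 0) (ht : 0 < t) (hq : F (u₀ + (v + s • e)) = q)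
    (hr : F (u₀ + (w + t • e)) = r) : (q - p₀ - ⟪y, v⟫) / s ≤ (r - p₀ - ⟪y, w⟫) / t := by
  have hts : 0 < t - s := by linarith
  set a := t / (t - s) with ha
  set b := -s / (t - s) with hb
  have hab : a + b = 1 := by rw [ha, hb]; field_simp; ring
  have hpt : a • (u₀ + (v + s • e)) + b • (u₀ + (w + t • e)) = u₀ + (a • v + b • w) := by
    match_scalars <;> simp only [ha, hb] <;> field_simp <;> ring
  have hseg := hF (u₀ + (v + s • e)) (u₀ + (w + t • e)) a b (by positivity)
    (div_nonneg (by linarith) hts.le) hab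
  rw [hpt, hq, hr, ← EReal.coe_mul, ← EReal.coe_mul, ← EReal.coe_add] at hseg
  have hmin := (hy _ (V.add_mem (V.smul_mem a hv) (V.smul_mem b hw))).trans hseg
  rw [EReal.coe_le_coe_iff, inner_add_right, real_inner_smul_right, real_inner_smul_right] at hmin
  have key : 0 ≤ t * (q - p₀ - ⟪y, v⟫) - s * (r - p₀ - ⟪y, w⟫) := by
    have : t * (q - p₀ - ⟪y, v⟫) - s * (r - p₀ - ⟪y, w⟫)
        = (t - s) * (a * q + b * r - (p₀ + (a * ⟪y, v⟫ + b * ⟪y, w⟫))) := by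
      rw [ha, hb]; field_simp; ring
    rw [this]
    exact mul_nonneg hts.le (by linarith)
  rw [div_le_iff_of_neg hs, div_mul_eq_mul_div, div_le_iff₀ ht]
  linarith

lemma exists_ne_top_add_neg_smul (hri : u₀ + x₀ ∈ intrinsicInterior ℝ {u | F u ≠ ⊤})
    (hx₀ : x₀ ∈ V) (e : Y) {v : Y} (hv : v ∈ V) {s : ℝ} (hs : F (u₀ + (v + s • e)) ≠ ⊤) :
    ∃ w ∈ V, ∃ ε : ℝ, 0 < ε ∧ F (u₀ + (w + (-(ε * s)) • e)) ≠ ⊤ := by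
  obtain ⟨ε, hε, hmem⟩ := exists_add_smul_sub_mem_of_mem_intrinsicInterior hri hs
  refine ⟨(1 + ε) • x₀ - ε • v, V.sub_mem (V.smul_mem _ hx₀) (V.smul_mem _ hv), ε, hε, ?_⟩
  have hpt : u₀ + ((1 + ε) • x₀ - ε • v + (-(ε * s)) • e)
      = u₀ + x₀ + ε • (u₀ + x₀ - (u₀ + (v + s • e))) := by module
  rw [hpt]
  exact hmem

/- The coefficient `c` has to lie between the difference quotients of `F` along `-e` and along
`e`. Convexity orders them, and the relative-interior point makes one family nonempty exactly
when the other is. -/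
lemma exists_minorant_add_smul (hF : EConvex F) (hbot : ∀ u, F u ≠ ⊥)
    (hri : u₀ + x₀ ∈ intrinsicInterior ℝ {u | F u ≠ ⊤}) (hx₀ : x₀ ∈ V)
    (hy : ∀ v ∈ V, ((p₀ + ⟪y, v⟫ : ℝ) : EReal) ≤ F (u₀ + v)) (e : Y) :
    ∃ c : ℝ, ∀ v ∈ V, ∀ s : ℝ, ((p₀ + ⟪y, v⟫ + s * c : ℝ) : EReal) ≤ F (u₀ + (v + s • e)) := by
  let slopes (S : Set ℝ) : Set ℝ := {σ | ∃ v ∈ V, ∃ s ∈ S, ∃ q : ℝ,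
    F (u₀ + (v + s • e)) = q ∧ σ = (q - p₀ - ⟪y, v⟫) / s}
  have hflip : ∀ S S' : Set ℝ, (∀ s ∈ S, ∀ ε : ℝ, 0 < ε → -(ε * s) ∈ S') →
      (slopes S).Nonempty → (slopes S').Nonempty := by
    rintro S S' hSS' ⟨_, v, hv, s, hs, q, hq, rfl⟩
    obtain ⟨w, hw, ε, hε, hfin⟩ :=
      exists_ne_top_add_neg_smul hri hx₀ e hv (s := s) (by simp [hq])
    exact ⟨_, w, hw, _, hSS' s hs ε hε, _, (EReal.coe_toReal hfin (hbot _)).symm, rfl⟩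
  obtain ⟨c, hlow, hupp⟩ := exists_between_of_forall_le_of_nonempty_iff (s := slopes (Iio 0))
    (t := slopes (Ioi 0))
    (by
      rintro _ ⟨v, hv, s, hs, q, hq, rfl⟩ _ ⟨w, hw, t, ht, r, hr, rfl⟩
      exact hF.slope_le_slope hy e hv hw hs ht hq hr)
    ⟨hflip _ _ fun s hs ε hε => neg_pos.2 (mul_neg_of_pos_of_neg hε hs),
      hflip _ _ fun s hs ε hε => neg_neg_of_pos (mul_pos hε hs)⟩
  refine ⟨c, fun v hv s => ?_⟩
  rcases eq_or_ne s 0 with rfl | hs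
  · simpa using hy v hv
  rcases eq_or_ne (F (u₀ + (v + s • e))) ⊤ with htop | hfin
  · rw [htop]; exact le_top
  lift F (u₀ + (v + s • e)) to ℝ using ⟨hfin, hbot _⟩ with q hq
  rw [EReal.coe_le_coe_iff]
  rcases hs.lt_or_gt with hs | hs
  · have := hlow _ ⟨v, hv, s, hs, q, hq.symm, rfl⟩
    rw [div_le_iff_of_neg hs] at this
    linarith
  · have := hupp _ ⟨v, hv, s, hs, q, hq.symm, rfl⟩
    rw [le_div_iff₀ hs] at this
    linarith

lemma exists_minorant_sup_span (hF : EConvex F) (hbot : ∀ u, F u ≠ ⊥)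
    (hri : u₀ + x₀ ∈ intrinsicInterior ℝ {u | F u ≠ ⊤}) (hx₀ : x₀ ∈ V)
    (hy : ∀ v ∈ V, ((p₀ + ⟪y, v⟫ : ℝ) : EReal) ≤ F (u₀ + v)) {e : Y} (he : e ∈ Vᗮ)
    (hee : ⟪e, e⟫ = 1) :
    ∃ y' : Y, y' - y ∈ Vᗮ ∧ ∀ v ∈ V ⊔ ℝ ∙ e, ((p₀ + ⟪y', v⟫ : ℝ) : EReal) ≤ F (u₀ + v) := by
  obtain ⟨c, hc⟩ := exists_minorant_add_smul hF hbot hri hx₀ hy e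
  refine ⟨y + (c - ⟪y, e⟫) • e, by simpa using Vᗮ.smul_mem _ he, fun v' hv' => ?_⟩
  obtain ⟨v, hv, _, hs, rfl⟩ := Submodule.mem_sup.1 hv'
  obtain ⟨s, rfl⟩ := Submodule.mem_span_singleton.1 hs
  have hinner : ⟪y + (c - ⟪y, e⟫) • e, v + s • e⟫ = ⟪y, v⟫ + s * c := by
    simp only [inner_add_left, inner_add_right, real_inner_smul_left, real_inner_smul_right,
      Submodule.inner_left_of_mem_orthogonal hv he, hee]
    ring
  rw [hinner, ← add_assoc]
  exact hc v hv s

lemma exists_minorant_extension [FiniteDimensional ℝ Y] (hF : EConvex F)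
    (hbot : ∀ u, F u ≠ ⊥) (hri : u₀ + x₀ ∈ intrinsicInterior ℝ {u | F u ≠ ⊤})
    (hx₀ : x₀ ∈ V) (hy : ∀ v ∈ V, ((p₀ + ⟪y, v⟫ : ℝ) : EReal) ≤ F (u₀ + v)) :
    ∃ y' : Y, y' - y ∈ Vᗮ ∧ ∀ v, ((p₀ + ⟪y', v⟫ : ℝ) : EReal) ≤ F (u₀ + v) := by
  induction V using WellFoundedGT.induction generalizing y with
  | _ V ih =>
    by_cases hV : V = ⊤
    · subst hV
      exact ⟨y, by simp, fun v => hy v Submodule.mem_top⟩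
    have : Nontrivial Vᗮ := by
      rwa [Submodule.nontrivial_iff_ne_bot, Ne, Submodule.orthogonal_eq_bot_iff]
    obtain ⟨⟨e, he⟩, hnorm⟩ := exists_norm_eq Vᗮ zero_le_one
    have hee : ⟪e, e⟫ = 1 := by
      rw [real_inner_self_eq_norm_sq, show ‖e‖ = 1 from hnorm, one_pow]
    have hlt : V < V ⊔ ℝ ∙ e := by
      refine left_lt_sup.2 fun hle => one_ne_zero (α := ℝ) ?_
      rw [← hee]
      exact Submodule.inner_right_of_mem_orthogonal (hle (Submodule.mem_span_singleton_self e)) he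
    obtain ⟨y', hy'y, hy'⟩ := exists_minorant_sup_span hF hbot hri hx₀ hy he hee
    obtain ⟨y'', hy''y', hy''⟩ := ih _ hlt (le_sup_left (a := V) hx₀) hy'
    refine ⟨y'', ?_, hy''⟩
    rw [← sub_add_sub_cancel y'' y' y]
    exact Vᗮ.add_mem (Submodule.orthogonal_le le_sup_left hy''y') hy'y

end Extension

theorem stmt_13_general
    {Z Y : Type*}
    [NormedAddCommGroup Z] [InnerProductSpace ℝ Z] [FiniteDimensional ℝ Z]
    [NormedAddCommGroup Y] [InnerProductSpace ℝ Y] [FiniteDimensional ℝ Y]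
    (h : Z → ℝ) (h' : Z → Z)
    (hconv : ConvexOn ℝ Set.univ h)
    (hgrad : ∀ w : Z, HasGradientAt h (h' w) w)
    (L : ℝ)
    (P : Y → EReal)
    (hP_ne_bot : ∀ u, P u ≠ ⊥)
    (hP_cvx : ∀ (u₁ u₂ : Y) (a b : ℝ), 0 ≤ a → 0 ≤ b → a + b = 1 →
      P (a • u₁ + b • u₂) ≤ (a : EReal) * P u₁ + (b : EReal) * P u₂)
    (M : Z →L[ℝ] Y) (b : Y)
    -- constraint qualification: `(Range(M) − b) ∩ ri(dom P) ≠ ∅`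
    (hCQ : ∃ w : Z, M w - b ∈ intrinsicInterior ℝ {u : Y | P u ≠ ⊤})
    (zbar : Z)
    -- `z̄` minimizes `z ↦ h(z) + P(Mz − b)`
    (hmin : ∀ w : Z, (h zbar : EReal) + P (M zbar - b) ≤ (h w : EReal) + P (M w - b)) :
    ∃ ybar : Y,
      IsSubgradAt P ybar (M zbar - b) ∧
      h' zbar + ContinuousLinearMap.adjoint M ybar = 0 ∧
      IsSubgradAt (conj P) (M zbar - b) ybar ∧
      IsSubgradAt (conjR h) zbar (h' zbar) ∧
      -- A1 for the dual problem: `B*z̄ = Mz̄ ∈ ∂(P* + ⟨b, ·⟩)(ȳ)`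
      IsSubgradAt (fun w => conj P w + ((⟪b, w⟫ : ℝ) : EReal)) (M zbar) ybar := by
  obtain ⟨w₀, hw₀⟩ := hCQ
  have hfin : P (M zbar - b) ≠ ⊤ :=
    EReal.ne_top_of_coe_add_le_coe_add (hmin w₀) (intrinsicInterior_subset hw₀)
  obtain ⟨p₀, hp₀⟩ : ∃ p : ℝ, P (M zbar - b) = p :=
    ⟨_, (EReal.coe_toReal hfin (hP_ne_bot _)).symm⟩
  have hsub : IsSubgradAt (fun w => P (M w - b)) (-h' zbar) zbar :=
    isSubgradAt_neg_of_hasGradientAt_of_forall_le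
      (EConvex.comp_linearMap_sub hP_cvx (M : Z →ₗ[ℝ] Y) b) (fun _ => hP_ne_bot _) hfin
      (hgrad zbar) hmin
  obtain ⟨y₁, hy₁⟩ := hsub.exists_adjoint_eq hp₀
  obtain ⟨ybar, hperp, hybar⟩ := exists_minorant_extension (x₀ := M (w₀ - zbar)) hP_cvx
    hP_ne_bot (by convert hw₀ using 1; simp) (LinearMap.mem_range_self _ _)
    ((hy₁ ▸ hsub).add_inner_le_of_mem_range hp₀)
  have hsubP : IsSubgradAt P ybar (M zbar - b) := fun u => by
    simpa [hp₀] using hybar (u - (M zbar - b))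
  have hadj : ContinuousLinearMap.adjoint M ybar = -h' zbar := by
    rw [M.orthogonal_range, LinearMap.mem_ker, ContinuousLinearMap.coe_coe, map_sub,
      sub_eq_zero, hy₁] at hperp
    exact hperp
  refine ⟨ybar, hsubP, by rw [hadj, add_neg_cancel], hsubP.isSubgradAt_conj hp₀, ?_, ?_⟩
  · rw [conjR_eq_conj]
    refine IsSubgradAt.isSubgradAt_conj (p := h zbar) (fun u => ?_) rfl
    exact_mod_cast hconv.add_inner_sub_le_of_hasGradientAt (hgrad zbar) u
  · simpa using (hsubP.isSubgradAt_conj hp₀).add_inner b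

/-- **Validity of assumption A1 for the dual problem (from the proof of Theorem 4.1).**
If `z̄` minimizes `z ↦ h(z) + P(Mz − b)`, then there is `ȳ ∈ ∂P(Mz̄ − b)` such that,
with `x̄ = ∇h(z̄)`, one has `x̄ + M*ȳ = 0`, `Mz̄ − b ∈ ∂P*(ȳ)` and `z̄ ∈ ∂h*(x̄)`;
in particular A1 holds for the dual problem with `f = h*`, `g = P* + ⟨b, ·⟩`,
`A = I`, `B = M*`, `c = 0`. -/
theorem stmt_13
    {Z Y : Type*}
    [NormedAddCommGroup Z] [InnerProductSpace ℝ Z] [FiniteDimensional ℝ Z]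
    [NormedAddCommGroup Y] [InnerProductSpace ℝ Y] [FiniteDimensional ℝ Y]
    (h : Z → ℝ) (h' : Z → Z)
    (hconv : ConvexOn ℝ Set.univ h)
    (hgrad : ∀ w : Z, HasGradientAt h (h' w) w)
    (L : ℝ) (hL : 0 < L)
    (hlip : ∀ u v : Z, ‖h' u - h' v‖ ≤ L * ‖u - v‖)
    (P : Y → EReal)
    (hP_ne_bot : ∀ u, P u ≠ ⊥) (hP_proper : ∃ u, P u ≠ ⊤)
    (hP_lsc : LowerSemicontinuous P)
    (hP_cvx : ∀ (u₁ u₂ : Y) (a b : ℝ), 0 ≤ a → 0 ≤ b → a + b = 1 →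
      P (a • u₁ + b • u₂) ≤ (a : EReal) * P u₁ + (b : EReal) * P u₂)
    (M : Z →L[ℝ] Y) (hM : M ≠ 0) (b : Y)
    -- constraint qualification: `(Range(M) − b) ∩ ri(dom P) ≠ ∅`
    (hCQ : ∃ w : Z, M w - b ∈ intrinsicInterior ℝ {u : Y | P u ≠ ⊤})
    (zbar : Z)
    -- `z̄` minimizes `z ↦ h(z) + P(Mz − b)`
    (hmin : ∀ w : Z, (h zbar : EReal) + P (M zbar - b) ≤ (h w : EReal) + P (M w - b)) :
    ∃ ybar : Y,
      IsSubgradAt P ybar (M zbar - b) ∧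
      h' zbar + ContinuousLinearMap.adjoint M ybar = 0 ∧
      IsSubgradAt (conj P) (M zbar - b) ybar ∧
      IsSubgradAt (conjR h) zbar (h' zbar) ∧
      -- A1 for the dual problem: `B*z̄ = Mz̄ ∈ ∂(P* + ⟨b, ·⟩)(ȳ)`
      IsSubgradAt (fun w => conj P w + ((⟪b, w⟫ : ℝ) : EReal)) (M zbar) ybar :=
  stmt_13_general h h' hconv hgrad L P hP_ne_bot hP_cvx M b hCQ zbar hmin
end
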